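/- arXiv:2108.12796 — 2 statements merged into one kernel-verified Lean document; each statement's English description precedes it below -/
import Mathlib

section
/- (Gould–Hsu inverse series relations) Let {a_i} and {b_i} be complex sequences such that the polynomials φ(x;0)=1 and φ(x;n)=∏_{k=0}^{n-1}(a_k + x b_k) are nonzero for all x,n in ℕ₀. If f(n) = ∑_{k=0}^{n} (-1)^k C(n,k) φ(k;n) g(k) for all n, then g(n) = ∑_{k=0}^{n} (-1)^k C(n,k) (a_k + k b_k)/φ(n;k+1) f(k) for all n, and conversely. -/
/-!
Write `A n k = (-1)^k C(n,k) φ(k;n)` and `B n k = (-1)^k C(n,k) (a_k + k b_k) / φ(n;k+1)`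
(`GouldHsu.coeff` and `GouldHsu.invCoeff`).
Both arrays are lower triangular, and `B` has nonzero diagonal, so it suffices to show that `B` is
a left inverse of `A`: then `f = A g` gives `g = B f`, and conversely `B f = g = B (A g)` forces
`f = A g`. The orthogonality `∑ₖ B n k A k j = δ_{jn}` telescopes: from
`(n - j)(a + k b) = (n - k)(a + j b) + (k - j)(a + n b)` and
`(k + 1 - j) C(n,k+1) C(k+1,j) = (n - k) C(n,k) C(k,j)` one gets
`(n - j) B n k A k j = V k - V (k + 1)` with
`V k = (-1)^(k+j) (k - j) C(n,k) C(k,j) φ(j;k) / φ(n;k)` (`GouldHsu.potential`), and `V 0 = V (n + 1) = 0`.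
-/

open Finset

/-- φ(x;n) = ∏_{k=0}^{n-1} (a_k + x b_k). -/
noncomputable def ghPhi (a b : ℕ → ℂ) (x : ℂ) (n : ℕ) : ℂ :=
  ∏ k ∈ Finset.range n, (a k + x * b k)

section TriangularInversion

variable {R : Type*}

theorem triangular_inverse_relation [Semiring R] {A B : ℕ → ℕ → R}
    (hA : ∀ n k, n < k → A n k = 0)
    (hBA : ∀ n j, j ≤ n → ∑ k ∈ range (n + 1), B n k * A k j = if j = n then 1 else 0)
    {f g : ℕ → R} (hf : ∀ n, f n = ∑ k ∈ range (n + 1), A n k * g k) (n : ℕ) :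
    g n = ∑ k ∈ range (n + 1), B n k * f k := by
  have hf' : ∀ k ∈ range (n + 1), f k = ∑ j ∈ range (n + 1), A k j * g j := fun k hk => by
    rw [hf k]
    refine sum_subset (range_subset_range.mpr (by simpa using hk)) fun j _ hjk => ?_
    rw [hA k j (by simpa using hjk), zero_mul]
  calc g n = ∑ j ∈ range (n + 1), (if j = n then 1 else 0) * g j := by simp
    _ = ∑ j ∈ range (n + 1), (∑ k ∈ range (n + 1), B n k * A k j) * g j :=
        sum_congr rfl fun j hj => by rw [hBA n j (by simpa [Nat.lt_succ_iff] using hj)]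
    _ = ∑ k ∈ range (n + 1), B n k * f k := by
        simp_rw [sum_mul, mul_assoc]
        rw [sum_comm]
        exact sum_congr rfl fun k hk => by rw [hf' k hk, mul_sum]

theorem eq_of_triangular_sums_eq [Ring R] [NoZeroDivisors R] {B : ℕ → ℕ → R}
    (hB : ∀ n, B n n ≠ 0) {f f' : ℕ → R}
    (h : ∀ n, ∑ k ∈ range (n + 1), B n k * f k = ∑ k ∈ range (n + 1), B n k * f' k) :
    f = f' := by
  funext n
  induction n using Nat.strong_induction_on with
  | _ n ih =>
    have hn := h n
    rw [sum_range_succ, sum_range_succ,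
      sum_congr rfl fun k hk => by rw [ih k (mem_range.mp hk)]] at hn
    exact mul_left_cancel₀ (hB n) (add_left_cancel hn)

theorem triangular_inverse_relations_iff [Ring R] [NoZeroDivisors R] {A B : ℕ → ℕ → R}
    (hA : ∀ n k, n < k → A n k = 0) (hB : ∀ n, B n n ≠ 0)
    (hBA : ∀ n j, j ≤ n → ∑ k ∈ range (n + 1), B n k * A k j = if j = n then 1 else 0)
    (f g : ℕ → R) :
    (∀ n, f n = ∑ k ∈ range (n + 1), A n k * g k) ↔
      ∀ n, g n = ∑ k ∈ range (n + 1), B n k * f k := by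
  refine ⟨triangular_inverse_relation hA hBA, fun hg => ?_⟩
  set f' : ℕ → R := fun n => ∑ k ∈ range (n + 1), A n k * g k
  have hg' := triangular_inverse_relation hA hBA (f := f') fun _ => rfl
  have hff' : f = f' := eq_of_triangular_sums_eq hB fun n => (hg n).symm.trans (hg' n)
  exact fun n => congrFun hff' n

end TriangularInversion

theorem Nat.cast_sub_mul_choose_succ_mul_choose_succ {R : Type*} [CommRing R] (n k j : ℕ) :
    ((k : R) + 1 - j) * (n.choose (k + 1) * (k + 1).choose j) =
      ((n : R) - k) * (n.choose k * k.choose j) := by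
  have hk : ((k : R) + 1) * n.choose (k + 1) = (n - k) * n.choose k := by
    rcases lt_trichotomy k n with hkn | rfl | hnk
    · have := congrArg (Nat.cast (R := R)) (Nat.choose_succ_right_eq n k)
      push_cast [Nat.cast_sub hkn.le] at this
      linear_combination this
    · simp
    · simp [Nat.choose_eq_zero_of_lt hnk, Nat.choose_eq_zero_of_lt (hnk.trans k.lt_succ_self)]
  have hj : ((k : R) + 1 - j) * (k + 1).choose j = (k + 1) * k.choose j := by
    rcases le_or_gt j k with hjk | hkj
    · have := congrArg (Nat.cast (R := R)) (Nat.choose_mul_succ_eq k j)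
      push_cast [Nat.cast_sub (hjk.trans k.le_succ)] at this
      linear_combination -this
    · obtain rfl | hkj := (Nat.succ_le_of_lt hkj).eq_or_lt
      · simp
      · simp [Nat.choose_eq_zero_of_lt hkj, Nat.choose_eq_zero_of_lt (k.lt_succ_self.trans hkj)]
  linear_combination (n.choose (k + 1) : R) * hj + (k.choose j : R) * hk

theorem ghPhi_succ (a b : ℕ → ℂ) (x : ℂ) (n : ℕ) :
    ghPhi a b x (n + 1) = ghPhi a b x n * (a n + x * b n) :=
  prod_range_succ _ _

namespace GouldHsu

variable (a b : ℕ → ℂ)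

noncomputable def coeff (n k : ℕ) : ℂ :=
  (-1) ^ k * (n.choose k : ℂ) * ghPhi a b k n

noncomputable def invCoeff (n k : ℕ) : ℂ :=
  (-1) ^ k * (n.choose k : ℂ) * (a k + k * b k) / ghPhi a b n (k + 1)

noncomputable def potential (n j k : ℕ) : ℂ :=
  (-1) ^ (k + j) * ((k : ℂ) - j) * (n.choose k * k.choose j) * ghPhi a b j k / ghPhi a b n k

theorem coeff_eq_zero_of_lt {n k : ℕ} (h : n < k) : coeff a b n k = 0 := by
  simp [coeff, Nat.choose_eq_zero_of_lt h]

theorem invCoeff_self_mul_coeff_self {n : ℕ} (hn : ghPhi a b n (n + 1) ≠ 0) :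
    invCoeff a b n n * coeff a b n n = 1 := by
  rw [invCoeff, coeff, Nat.choose_self, Nat.cast_one, ghPhi_succ] at *
  obtain ⟨hP, hA⟩ := mul_ne_zero_iff.mp hn
  field_simp
  rw [← pow_mul, mul_comm, pow_mul, neg_one_sq, one_pow]

theorem invCoeff_self_ne_zero {n : ℕ} (hn : ghPhi a b n (n + 1) ≠ 0) : invCoeff a b n n ≠ 0 :=
  left_ne_zero_of_mul_eq_one (invCoeff_self_mul_coeff_self a b hn)

theorem sub_mul_invCoeff_mul_coeff {n k : ℕ} (j : ℕ) (hn : ghPhi a b n (k + 1) ≠ 0) :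
    ((n : ℂ) - j) * (invCoeff a b n k * coeff a b k j) =
      potential a b n j k - potential a b n j (k + 1) := by
  rw [ghPhi_succ] at hn
  obtain ⟨hP, hA⟩ := mul_ne_zero_iff.mp hn
  have hC := Nat.cast_sub_mul_choose_succ_mul_choose_succ (R := ℂ) n k j
  simp only [invCoeff, coeff, potential, ghPhi_succ, Nat.cast_add, Nat.cast_one, pow_succ, pow_add]
  field_simp
  linear_combination -ghPhi a b j k * (a k + j * b k) * hC

theorem potential_zero (n j : ℕ) : potential a b n j 0 = 0 := by
  rcases j.eq_zero_or_pos with rfl | hj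
  · simp [potential]
  · simp [potential, Nat.choose_eq_zero_of_lt hj]

theorem potential_succ_self (n j : ℕ) : potential a b n j (n + 1) = 0 := by
  simp [potential]

theorem sum_invCoeff_mul_coeff {n j : ℕ} (hn : ∀ k, ghPhi a b n k ≠ 0) (hj : j ≤ n) :
    ∑ k ∈ range (n + 1), invCoeff a b n k * coeff a b k j = if j = n then 1 else 0 := by
  obtain rfl | hjn := hj.eq_or_lt
  · rw [if_pos rfl, sum_range_succ, sum_eq_zero fun k hk => by
      rw [coeff_eq_zero_of_lt a b (mem_range.mp hk), mul_zero], zero_add,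
      invCoeff_self_mul_coeff_self a b (hn _)]
  have hsum : ((n : ℂ) - j) * ∑ k ∈ range (n + 1), invCoeff a b n k * coeff a b k j = 0 := by
    rw [mul_sum, sum_congr rfl fun k _ => sub_mul_invCoeff_mul_coeff a b j (hn (k + 1)),
      sum_range_sub', potential_zero, potential_succ_self, sub_zero]
  have hnj : (n : ℂ) - j ≠ 0 := sub_ne_zero.mpr (Nat.cast_injective.ne hjn.ne')
  rw [if_neg hjn.ne]
  exact (mul_eq_zero.mp hsum).resolve_left hnj

end GouldHsu

theorem gould_hsu_inversion (a b : ℕ → ℂ)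
    (hphi : ∀ x n : ℕ, ghPhi a b (x : ℂ) n ≠ 0) (f g : ℕ → ℂ) :
    (∀ n : ℕ, f n = ∑ k ∈ Finset.range (n + 1),
        (-1) ^ k * (n.choose k : ℂ) * ghPhi a b (k : ℂ) n * g k)
      ↔
    (∀ n : ℕ, g n = ∑ k ∈ Finset.range (n + 1),
        (-1) ^ k * (n.choose k : ℂ) * (a k + (k : ℂ) * b k) / ghPhi a b (n : ℂ) (k + 1) * f k) :=
  triangular_inverse_relations_iff (A := GouldHsu.coeff a b) (B := GouldHsu.invCoeff a b)
    (fun _ _ h => GouldHsu.coeff_eq_zero_of_lt a b h)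
    (fun n => GouldHsu.invCoeff_self_ne_zero a b (hphi n (n + 1)))
    (fun n _ hj => GouldHsu.sum_invCoeff_mul_coeff a b (hphi n) hj) f g
end

section
/- (Carlitz q-analogue of Gould–Hsu inversions) Let q be a nonzero complex number with the Gaussian binomial coefficients well defined, and let {a_i},{b_i} be complex sequences such that φ(x;0)=1 and φ(x;n)=∏_{k=0}^{n-1}(a_k + x b_k) are nonzero for x = q^{-m}, m,n ∈ ℕ₀. If f(n) = ∑_{k=0}^n (-1)^k [n,k]_q φ(q^{-k};n) g(k) for all n, then g(n) = ∑_{k=0}^n (-1)^k [n,k]_q q^{C(n-k,2)} (a_k + q^{-k} b_k)/φ(q^{-n};k+1) f(k) for all n, and conversely. -/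
open Finset

/-- q-shifted factorial (x;q)_n = ∏_{j=0}^{n-1} (1 - x q^j). -/
noncomputable def qPoch (x q : ℂ) (n : ℕ) : ℂ :=
  ∏ j ∈ Finset.range n, (1 - x * q ^ j)

/-- Gaussian binomial coefficient [n,k]_q. -/
noncomputable def qBinom (q : ℂ) (n k : ℕ) : ℂ :=
  qPoch q q n / (qPoch q q k * qPoch q q (n - k))

/-- φ(x;n) = ∏_{k=0}^{n-1} (a_k + x b_k). -/
noncomputable def carlitzPhi (a b : ℕ → ℂ) (x : ℂ) (n : ℕ) : ℂ :=
  ∏ k ∈ Finset.range n, (a k + x * b k)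

/-!
Let `A` and `B` be the lower-triangular kernels of the two relations. Lower-triangular matrices
over a commutative ring are mutually inverse as soon as `A * B = 1`, so everything rests on the
orthogonality `∑_{k ≤ j ≤ n} A n j * B j k = δ n k`. For `k < n`, after cancelling
`φ(q^{-j}; k+1)` and using `[n,j][j,k] = [n,k][n-k,j-k]`, the `j`-th term is a constant times
`(-1)^i [n-k,i] q^{C(i,2)} p(q^{-i})`, where `i = j - k` and
`p(x) = ∏_{k<t<n} (a_t + x q^{-k} b_t)` has degree `< n - k`. This `q`-difference of order `n - k`
kills every monomial `x^d` with `d < n - k`: by the `q`-binomial theorem it equals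
`(q^{-d}; q)_{n-k}`, which contains the factor `1 - q^{-d} q^d = 0`.
-/

open Polynomial

theorem neg_one_pow_sq {R : Type*} [Monoid R] [HasDistribNeg R] (n : ℕ) :
    ((-1 : R) ^ n) ^ 2 = 1 := by
  rw [← pow_mul, pow_mul', neg_one_sq, one_pow]

theorem eq_of_sum_range_mul_eq {S : Type*} [Ring S] {A : ℕ → ℕ → S}
    (hA : ∀ n, IsLeftRegular (A n n)) {v w : ℕ → S}
    (h : ∀ n, ∑ k ∈ range (n + 1), A n k * v k = ∑ k ∈ range (n + 1), A n k * w k) :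
    v = w := by
  funext n
  induction n using Nat.strong_induction_on with
  | _ n ih =>
    have hn := h n
    rw [sum_range_succ, sum_range_succ,
      sum_congr rfl fun k hk => by rw [ih k (mem_range.mp hk)], add_left_cancel_iff] at hn
    exact hA n hn

section Triangular

variable {R : Type*} [CommRing R] {A B : ℕ → ℕ → R}

theorem sum_range_mul_sum_range_of_orthogonal
    (hAB : ∀ k n, k ≤ n → ∑ j ∈ Icc k n, A n j * B j k = if n = k then 1 else 0)
    (f : ℕ → R) (n : ℕ) :
    ∑ k ∈ range (n + 1), A n k * ∑ j ∈ range (k + 1), B k j * f j = f n := by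
  calc ∑ k ∈ range (n + 1), A n k * ∑ j ∈ range (k + 1), B k j * f j
      = ∑ j ∈ range (n + 1), ∑ k ∈ Icc j n, A n k * (B k j * f j) := by
        simp_rw [mul_sum]
        exact sum_comm' fun k j => by simp only [mem_range, mem_Icc]; omega
    _ = ∑ j ∈ range (n + 1), (if n = j then 1 else 0) * f j := by
        refine sum_congr rfl fun j hj => ?_
        simp_rw [← mul_assoc, ← sum_mul, hAB j n (Nat.lt_succ_iff.mp (mem_range.mp hj))]
    _ = f n := by simp

theorem triangular_inversion_iff
    (hAB : ∀ k n, k ≤ n → ∑ j ∈ Icc k n, A n j * B j k = if n = k then 1 else 0)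
    (f g : ℕ → R) :
    (∀ n, f n = ∑ k ∈ range (n + 1), A n k * g k) ↔
      ∀ n, g n = ∑ k ∈ range (n + 1), B n k * f k := by
  have hinv := sum_range_mul_sum_range_of_orthogonal hAB f
  constructor
  · intro hf
    have hdiag n : IsLeftRegular (A n n) :=
      (IsUnit.of_mul_eq_one (B n n) (by simpa using hAB n n le_rfl)).isRegular.left
    exact congrFun (eq_of_sum_range_mul_eq hdiag fun n => by rw [← hf, hinv])
  · intro hg n
    simp_rw [← hg] at hinv
    exact (hinv n).symm

end Triangular

section QBinomial

variable {q : ℂ}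

theorem qPoch_zero (x q : ℂ) : qPoch x q 0 = 1 := prod_range_zero _

theorem qPoch_succ (x q : ℂ) (n : ℕ) : qPoch x q (n + 1) = qPoch x q n * (1 - x * q ^ n) :=
  prod_range_succ _ _

theorem qBinom_self (hqq : ∀ n, qPoch q q n ≠ 0) (n : ℕ) : qBinom q n n = 1 := by
  simp [qBinom, qPoch_zero, hqq n]

theorem qBinom_zero_right (hqq : ∀ n, qPoch q q n ≠ 0) (n : ℕ) : qBinom q n 0 = 1 := by
  simp [qBinom, qPoch_zero, hqq n]

-- `k < n` is needed: for `k > n` the truncated subtraction makes `qBinom q n k` nonzero.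
theorem qBinom_succ_succ (hqq : ∀ n, qPoch q q n ≠ 0) {n k : ℕ} (hkn : k < n) :
    qBinom q (n + 1) (k + 1) = qBinom q n (k + 1) + q ^ (n - k) * qBinom q n k := by
  obtain ⟨t, rfl⟩ : ∃ t, n = k + t + 1 := ⟨n - k - 1, by omega⟩
  have hfac m : (1 : ℂ) - q * q ^ m ≠ 0 :=
    right_ne_zero_of_mul (qPoch_succ q q m ▸ hqq (m + 1))
  simp only [qBinom, show k + t + 1 + 1 - (k + 1) = t + 1 by omega,
    show k + t + 1 - (k + 1) = t by omega, show k + t + 1 - k = t + 1 by omega, qPoch_succ q q]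
  field_simp [hqq k, hqq t, hqq (k + t + 1), hfac k, hfac t, hfac (k + t + 1)]
  ring

theorem qBinom_mul_qBinom (hqq : ∀ n, qPoch q q n ≠ 0) {n j k : ℕ} (hkj : k ≤ j)
    (hjn : j ≤ n) :
    qBinom q n j * qBinom q j k = qBinom q n k * qBinom q (n - k) (j - k) := by
  obtain ⟨s, rfl⟩ := Nat.exists_eq_add_of_le hkj
  obtain ⟨t, rfl⟩ := Nat.exists_eq_add_of_le hjn
  simp only [qBinom, Nat.add_sub_cancel_left, show k + s + t - k = s + t by omega,
    show s + t - s = t by omega]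
  field_simp [hqq k, hqq s, hqq t, hqq (k + s), hqq (s + t), hqq (k + s + t)]

/-- The q-binomial theorem (Rothe). -/
theorem qPoch_eq_sum_qBinom (hqq : ∀ n, qPoch q q n ≠ 0) (z : ℂ) (m : ℕ) :
    qPoch z q m = ∑ i ∈ range (m + 1), (-1) ^ i * qBinom q m i * q ^ i.choose 2 * z ^ i := by
  set T : ℕ → ℕ → ℂ := fun m i => (-1) ^ i * qBinom q m i * q ^ i.choose 2 * z ^ i
  change qPoch z q m = ∑ i ∈ range (m + 1), T m i
  induction m with
  | zero => simp [T, qPoch_zero, qBinom_self hqq]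
  | succ m ih =>
    have hchoose i : (i + 1).choose 2 = i.choose 2 + i := by
      simp [Nat.choose_succ_succ', add_comm]
    have hstep i (hi : i < m) : T (m + 1) (i + 1) = T m (i + 1) - z * q ^ m * T m i := by
      simp only [T, qBinom_succ_succ hqq hi, hchoose]
      rw [show q ^ m = q ^ i * q ^ (m - i) by rw [← pow_add, Nat.add_sub_cancel' hi.le]]
      ring
    have htop : T (m + 1) (m + 1) = -(z * q ^ m * T m m) := by
      simp only [T, qBinom_self hqq, hchoose]
      ring
    have hbot : T (m + 1) 0 = T m 0 := by simp [T, qBinom_zero_right hqq]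
    rw [qPoch_succ, ih, sum_range_succ' (T (m + 1)),
      sum_range_succ (fun i => T (m + 1) (i + 1)),
      sum_congr rfl fun i hi => hstep i (mem_range.mp hi), sum_sub_distrib, ← mul_sum, htop, hbot]
    linear_combination sum_range_succ' (T m) m - z * q ^ m * sum_range_succ (T m) m

theorem sum_qBinom_mul_eval_eq_zero (hq : q ≠ 0) (hqq : ∀ n, qPoch q q n ≠ 0) {m : ℕ}
    {p : ℂ[X]} (hp : p.natDegree < m) :
    ∑ i ∈ range (m + 1),
      (-1) ^ i * qBinom q m i * q ^ i.choose 2 * p.eval (q⁻¹ ^ i) = 0 := by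
  simp_rw [eval_eq_sum_range' hp, mul_sum]
  rw [sum_comm]
  refine sum_eq_zero fun d hd => ?_
  have hvanish : qPoch (q⁻¹ ^ d) q m = 0 :=
    prod_eq_zero hd (by rw [← mul_pow, inv_mul_cancel₀ hq, one_pow, sub_self])
  rw [qPoch_eq_sum_qBinom hqq] at hvanish
  rw [← mul_zero (p.coeff d), ← hvanish, mul_sum]
  exact sum_congr rfl fun i _ => by ring

end QBinomial

section Carlitz

variable {q : ℂ} {a b : ℕ → ℂ}

theorem carlitzPhi_succ (a b : ℕ → ℂ) (x : ℂ) (n : ℕ) :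
    carlitzPhi a b x (n + 1) = carlitzPhi a b x n * (a n + x * b n) :=
  prod_range_succ _ _

theorem carlitzPhi_mul_prod_Ico (a b : ℕ → ℂ) (x : ℂ) {k n : ℕ} (h : k ≤ n) :
    carlitzPhi a b x k * ∏ t ∈ Ico k n, (a t + x * b t) = carlitzPhi a b x n :=
  prod_range_mul_prod_Ico _ h

noncomputable def carlitzMat (q : ℂ) (a b : ℕ → ℂ) (n k : ℕ) : ℂ :=
  (-1) ^ k * qBinom q n k * carlitzPhi a b (q ^ (-(k : ℤ))) n

noncomputable def carlitzInvMat (q : ℂ) (a b : ℕ → ℂ) (n k : ℕ) : ℂ :=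
  (-1) ^ k * qBinom q n k * q ^ ((n - k).choose 2) *
    (a k + q ^ (-(k : ℤ)) * b k) / carlitzPhi a b (q ^ (-(n : ℤ))) (k + 1)

theorem carlitzMat_mul_carlitzInvMat_self (hqq : ∀ n, qPoch q q n ≠ 0) {n : ℕ}
    (hΦ : carlitzPhi a b (q ^ (-(n : ℤ))) (n + 1) ≠ 0) :
    carlitzMat q a b n n * carlitzInvMat q a b n n = 1 := by
  simp only [carlitzMat, carlitzInvMat, qBinom_self hqq, Nat.sub_self, Nat.choose_zero_succ,
    pow_zero]
  rw [carlitzPhi_succ] at hΦ ⊢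
  rw [← mul_div_assoc, div_eq_one_iff_eq hΦ]
  linear_combination carlitzPhi a b (q ^ (-(n : ℤ))) n * (a n + q ^ (-(n : ℤ)) * b n) *
    neg_one_pow_sq (R := ℂ) n

theorem carlitzMat_mul_carlitzInvMat_eq_mul_eval (hqq : ∀ n, qPoch q q n ≠ 0) {k m i : ℕ}
    (hi : i ≤ m + 1) (hΦ : carlitzPhi a b (q ^ (-((k + i : ℕ) : ℤ))) (k + 1) ≠ 0) :
    carlitzMat q a b (k + m + 1) (k + i) * carlitzInvMat q a b (k + i) k =
      qBinom q (k + m + 1) k * (a k + q ^ (-(k : ℤ)) * b k) *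
        ((-1) ^ i * qBinom q (m + 1) i * q ^ i.choose 2 *
          (∏ t ∈ Ico (k + 1) (k + m + 1), (C (q⁻¹ ^ k * b t) * X + C (a t))).eval
            (q⁻¹ ^ i)) := by
  have hbinom := qBinom_mul_qBinom hqq (Nat.le_add_right k i) (show k + i ≤ k + m + 1 by omega)
  rw [show k + m + 1 - k = m + 1 by omega, Nat.add_sub_cancel_left] at hbinom
  have hx : q ^ (-((k + i : ℕ) : ℤ)) = q⁻¹ ^ k * q⁻¹ ^ i := by
    rw [zpow_neg, zpow_natCast, pow_add, mul_inv, inv_pow, inv_pow]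
  simp only [eval_prod, eval_add, eval_mul, eval_C, eval_X]
  unfold carlitzMat carlitzInvMat
  rw [hx] at hΦ
  rw [← carlitzPhi_mul_prod_Ico a b _ (show k + 1 ≤ k + m + 1 by omega),
    Nat.add_sub_cancel_left, hx, ← mul_div_assoc, div_eq_iff hΦ]
  set Φ := carlitzPhi a b (q⁻¹ ^ k * q⁻¹ ^ i) (k + 1)
  set P := ∏ t ∈ Ico (k + 1) (k + m + 1), (a t + q⁻¹ ^ k * q⁻¹ ^ i * b t)
  have hP : ∏ t ∈ Ico (k + 1) (k + m + 1), (q⁻¹ ^ k * b t * q⁻¹ ^ i + a t) = P :=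
    prod_congr rfl fun t _ => by ring
  rw [hP]
  linear_combination (-1) ^ i * q ^ i.choose 2 * (a k + q ^ (-(k : ℤ)) * b k) * Φ * P *
    (((-1) ^ k) ^ 2 * hbinom +
      qBinom q (k + m + 1) k * qBinom q (m + 1) i * neg_one_pow_sq (R := ℂ) k)

theorem sum_carlitzMat_mul_carlitzInvMat (hq : q ≠ 0) (hqq : ∀ n, qPoch q q n ≠ 0)
    (hphi : ∀ m n : ℕ, carlitzPhi a b (q ^ (-(m : ℤ))) n ≠ 0) {k n : ℕ} (hkn : k ≤ n) :
    ∑ j ∈ Icc k n, carlitzMat q a b n j * carlitzInvMat q a b j k =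
      if n = k then 1 else 0 := by
  rcases hkn.eq_or_lt with rfl | hlt
  · simp [carlitzMat_mul_carlitzInvMat_self hqq (hphi k (k + 1))]
  obtain ⟨m, rfl⟩ : ∃ m, n = k + m + 1 := ⟨n - k - 1, by omega⟩
  have hdeg :
      (∏ t ∈ Ico (k + 1) (k + m + 1), (C (q⁻¹ ^ k * b t) * X + C (a t))).natDegree < m + 1 :=
    calc _ ≤ ∑ t ∈ Ico (k + 1) (k + m + 1), (C (q⁻¹ ^ k * b t) * X + C (a t)).natDegree :=
          natDegree_prod_le _ _
      _ ≤ ∑ t ∈ Ico (k + 1) (k + m + 1), 1 := by gcongr; exact natDegree_linear_le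
      _ < m + 1 := by simp
  rw [if_neg (by omega), ← Ico_add_one_right_eq_Icc, sum_Ico_eq_sum_range,
    show k + m + 1 + 1 - k = m + 1 + 1 by omega,
    sum_congr rfl fun i hi => carlitzMat_mul_carlitzInvMat_eq_mul_eval hqq
      (Nat.lt_succ_iff.mp (mem_range.mp hi)) (hphi _ _),
    ← mul_sum, sum_qBinom_mul_eval_eq_zero hq hqq hdeg, mul_zero]

end Carlitz

theorem carlitz_inversion (q : ℂ) (hq : q ≠ 0)
    (hqq : ∀ n : ℕ, qPoch q q n ≠ 0) (a b : ℕ → ℂ)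
    (hphi : ∀ m n : ℕ, carlitzPhi a b (q ^ (-(m : ℤ))) n ≠ 0) (f g : ℕ → ℂ) :
    (∀ n : ℕ, f n = ∑ k ∈ Finset.range (n + 1),
        (-1) ^ k * qBinom q n k * carlitzPhi a b (q ^ (-(k : ℤ))) n * g k)
      ↔
    (∀ n : ℕ, g n = ∑ k ∈ Finset.range (n + 1),
        (-1) ^ k * qBinom q n k * q ^ ((n - k).choose 2) *
          (a k + q ^ (-(k : ℤ)) * b k) / carlitzPhi a b (q ^ (-(n : ℤ))) (k + 1) * f k) :=
  triangular_inversion_iff (A := carlitzMat q a b) (B := carlitzInvMat q a b)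
    (fun _ _ hkn => sum_carlitzMat_mul_carlitzInvMat hq hqq hphi hkn) f g
end
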